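/- Let Q be a key polynomial with ε := ε(Q). For every f ∈ K[x] with deg(f) < deg(Q) and every b ∈ ℕ, ν_Q(∂_b(f Q^n)) ≥ ν(f Q^n) - bε. -/

import Mathlib

/-!
Induct on `n` with the Leibniz rule `∂_b(h Q) = Σ_{i+j=b} ∂_i h · ∂_j Q`, using
`ν(∂_j Q) ≥ ν(Q) - jε`. Each term is then controlled by `ν_Q(h w) ≥ ν_Q(h) + ν(w)` for
`deg w < deg Q`, which reduces, coefficient by coefficient, to `ν(u v) ≤ ν_Q(u v)` for
`u, v` of degree `< deg Q`. This is where `Q` being a key polynomial enters: such `u` have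
`ε(u) < ε(Q)`. Write `u v = Q a + r` with `a, r` of degree `< deg Q`. If `ν(Q a) ≤ ν(r)` and
`ν(Q a) < ν(u v)`, then for `b ∈ I(Q)` the term `∂_b Q · a` strictly dominates `∂_b(u v)`,
so `ν(∂_b(u v)) = ν(Q a) - bε < ν(u v) - bε`, contradicting the Leibniz bound for `∂_b(u v)`.
-/

open Polynomial
open scoped Classical
noncomputable section

/-- `ν` is (the restriction to nonzero polynomials of) a valuation on `K[x]`,
nontrivial on `K`, with `ν(x) ≥ 0`.  Values are taken in a linearly ordered
field `Γ` (playing the role of the divisible hull of the value group). -/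
structure IsVal {K : Type*} [Field K] {Γ : Type*} [Field Γ] [LinearOrder Γ] [IsStrictOrderedRing Γ]
    (ν : Polynomial K → Γ) : Prop where
  map_mul : ∀ f g : Polynomial K, f ≠ 0 → g ≠ 0 → ν (f * g) = ν f + ν g
  map_add : ∀ f g : Polynomial K, f ≠ 0 → g ≠ 0 → f + g ≠ 0 →
    min (ν f) (ν g) ≤ ν (f + g)
  nontrivial : ∃ a : K, a ≠ 0 ∧ ν (C a) ≠ 0
  nonneg_x : 0 ≤ ν X

/-- `ε(f) = max_{b ≥ 1, ∂_b f ≠ 0} (ν(f) - ν(∂_b f))/b`, where `∂_b` is the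
`b`-th formal (Hasse) derivative.  (Terms with `∂_b f = 0` correspond to the
value `-∞` and are omitted from the maximum.) -/
noncomputable def eps {K : Type*} [Field K] {Γ : Type*} [Field Γ] [LinearOrder Γ] [IsStrictOrderedRing Γ]
    (ν : Polynomial K → Γ) (f : Polynomial K) : Γ :=
  if h : ((Finset.Icc 1 f.natDegree).filter
      fun b => Polynomial.hasseDeriv b f ≠ 0).Nonempty then
    ((Finset.Icc 1 f.natDegree).filter
      fun b => Polynomial.hasseDeriv b f ≠ 0).sup' h
      fun b => (ν f - ν (Polynomial.hasseDeriv b f)) / (b : Γ)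
  else 0

/-- A monic (nonconstant) polynomial `Q` is a key polynomial for `ν` if every
`f ∈ K[x]` with `ε(f) ≥ ε(Q)` satisfies `deg f ≥ deg Q`. -/
def IsKeyPol {K : Type*} [Field K] {Γ : Type*} [Field Γ] [LinearOrder Γ] [IsStrictOrderedRing Γ]
    (ν : Polynomial K → Γ) (Q : Polynomial K) : Prop :=
  Q.Monic ∧ 1 ≤ Q.natDegree ∧
    ∀ f : Polynomial K, 1 ≤ f.natDegree → eps ν Q ≤ eps ν f →
      Q.natDegree ≤ f.natDegree

/-- The `i`-th coefficient `f_i` of the `q`-standard expansion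
`f = Σ f_i q^i` (each `f_i = 0` or `deg f_i < deg q`), for `q` monic. -/
noncomputable def qCoeff {K : Type*} [Field K] (q f : Polynomial K) (i : ℕ) :
    Polynomial K :=
  (f /ₘ q ^ i) %ₘ q

/-- The `q`-truncation `ν_q(f) = min_i ν(f_i q^i)` of `ν`, the minimum taken
over the nonzero coefficients of the `q`-standard expansion of `f`. -/
noncomputable def truncVal {K : Type*} [Field K] {Γ : Type*}
    [Field Γ] [LinearOrder Γ] [IsStrictOrderedRing Γ] (ν : Polynomial K → Γ) (q f : Polynomial K) : Γ :=
  if h : ((Finset.range (f.natDegree + 1)).filter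
      fun i => qCoeff q f i ≠ 0).Nonempty then
    ((Finset.range (f.natDegree + 1)).filter
      fun i => qCoeff q f i ≠ 0).inf' h
      fun i => ν (qCoeff q f i * q ^ i)
  else 0

/-- `I(Q) = {b : (ν(Q) - ν(∂_b Q))/b = ε(Q)}`. -/
def Iset {K : Type*} [Field K] {Γ : Type*} [Field Γ] [LinearOrder Γ] [IsStrictOrderedRing Γ]
    (ν : Polynomial K → Γ) (Q : Polynomial K) : Set ℕ :=
  {b | 1 ≤ b ∧ Polynomial.hasseDeriv b Q ≠ 0 ∧
    (ν Q - ν (Polynomial.hasseDeriv b Q)) / (b : Γ) = eps ν Q}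

/-- `S_Q(f) = {i : ν(f_i Q^i) = ν_Q(f)}` (over nonzero coefficients). -/
def Sset {K : Type*} [Field K] {Γ : Type*} [Field Γ] [LinearOrder Γ] [IsStrictOrderedRing Γ]
    (ν : Polynomial K → Γ) (q f : Polynomial K) : Set ℕ :=
  {i | qCoeff q f i ≠ 0 ∧ ν (qCoeff q f i * q ^ i) = truncVal ν q f}


variable {K : Type*} [Field K] {Γ : Type*} [Field Γ] [LinearOrder Γ] [IsStrictOrderedRing Γ]

open Finset

section UltrametricSum

variable {ι M α : Type*} [AddCommMonoid M] [LinearOrder α] {w : M → α}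

theorem le_apply_sum (hw : ∀ x y, x ≠ 0 → y ≠ 0 → x + y ≠ 0 → min (w x) (w y) ≤ w (x + y))
    {c : α} {s : Finset ι} {F : ι → M} (hF : ∀ i ∈ s, F i ≠ 0 → c ≤ w (F i))
    (hs : ∑ i ∈ s, F i ≠ 0) : c ≤ w (∑ i ∈ s, F i) := by
  induction s using Finset.induction_on with
  | empty => simp at hs
  | insert a s ha ih =>
    rw [sum_insert ha] at hs ⊢
    have hF' : ∀ i ∈ s, F i ≠ 0 → c ≤ w (F i) := fun i hi => hF i (mem_insert_of_mem hi)
    by_cases hFa : F a = 0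
    · rw [hFa, zero_add] at hs ⊢
      exact ih hF' hs
    by_cases hS : ∑ i ∈ s, F i = 0
    · rw [hS, add_zero] at hs ⊢
      exact hF a (mem_insert_self a s) hFa
    exact (le_min (hF a (mem_insert_self a s) hFa) (ih hF' hS)).trans (hw _ _ hFa hS hs)

theorem lt_apply_sum (hw : ∀ x y, x ≠ 0 → y ≠ 0 → x + y ≠ 0 → min (w x) (w y) ≤ w (x + y))
    {c : α} {s : Finset ι} {F : ι → M} (hF : ∀ i ∈ s, F i ≠ 0 → c < w (F i))
    (hs : ∑ i ∈ s, F i ≠ 0) : c < w (∑ i ∈ s, F i) := by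
  rw [← sum_filter_ne_zero] at hs ⊢
  obtain ⟨i, hi, hmin⟩ := exists_min_image _ (w ∘ F) (nonempty_of_sum_ne_zero hs)
  rw [mem_filter] at hi
  exact (hF i hi.1 hi.2).trans_le (le_apply_sum hw (fun j hj _ => hmin j hj) hs)

end UltrametricSum

theorem le_apply_hasseDeriv_mul {R α : Type*} [Semiring R] [LinearOrder α] {w : R[X] → α}
    (hw : ∀ x y, x ≠ 0 → y ≠ 0 → x + y ≠ 0 → min (w x) (w y) ≤ w (x + y))
    {c : α} {u v : R[X]} {b : ℕ}
    (h : ∀ i j, i + j = b → hasseDeriv i u ≠ 0 → hasseDeriv j v ≠ 0 →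
      c ≤ w (hasseDeriv i u * hasseDeriv j v))
    (hne : hasseDeriv b (u * v) ≠ 0) : c ≤ w (hasseDeriv b (u * v)) := by
  rw [hasseDeriv_mul] at hne ⊢
  exact le_apply_sum hw (fun ij hij hF => h ij.1 ij.2 (HasAntidiagonal.mem_antidiagonal.mp hij)
    (left_ne_zero_of_mul hF) (right_ne_zero_of_mul hF)) hne

theorem le_natDegree_of_hasseDeriv_ne_zero {R : Type*} [Semiring R] {g : R[X]} {b : ℕ}
    (h : hasseDeriv b g ≠ 0) : b ≤ g.natDegree :=
  not_lt.mp fun hb => h (hasseDeriv_eq_zero_of_lt_natDegree g b hb)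

variable {ν : K[X] → Γ}

namespace IsVal

theorem map_one (hν : IsVal ν) : ν 1 = 0 := by
  have h := hν.map_mul 1 1 one_ne_zero one_ne_zero
  rw [mul_one] at h
  linarith

theorem map_neg (hν : IsVal ν) {g : K[X]} (hg : g ≠ 0) : ν (-g) = ν g := by
  have h1 := hν.map_mul (-1) (-1) (by simp) (by simp)
  rw [neg_mul_neg, one_mul, hν.map_one] at h1
  rw [← neg_one_mul, hν.map_mul _ _ (by simp) hg]
  linarith

theorem map_add_of_lt (hν : IsVal ν) {x y : K[X]} (hx : x ≠ 0) (hy : y ≠ 0 → ν x < ν y) :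
    x + y ≠ 0 ∧ ν (x + y) = ν x := by
  by_cases hy0 : y = 0
  · simpa [hy0] using hx
  have hlt := hy hy0
  have hxy : x + y ≠ 0 := fun h => by
    rw [eq_neg_of_add_eq_zero_right h, hν.map_neg hx] at hlt
    exact lt_irrefl _ hlt
  refine ⟨hxy, le_antisymm ?_ ?_⟩
  · have h := hν.map_add (x + y) (-y) hxy (neg_ne_zero.mpr hy0) (by simpa using hx)
    rw [add_neg_cancel_right, hν.map_neg hy0] at h
    exact (min_le_iff.mp h).resolve_right hlt.not_ge
  · simpa [min_eq_left hlt.le] using hν.map_add x y hx hy0 hxy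

theorem map_pow (hν : IsVal ν) {q : K[X]} (hq : q ≠ 0) (k : ℕ) : ν (q ^ k) = k * ν q := by
  induction k with
  | zero => simpa using hν.map_one
  | succ k ih =>
    rw [pow_succ, hν.map_mul _ _ (pow_ne_zero _ hq) hq, ih]
    push_cast
    ring

theorem sub_mul_le_val_hasseDeriv_mul (hν : IsVal ν) {e : Γ} {u v : K[X]}
    (hu : ∀ i, hasseDeriv i u ≠ 0 → ν u - i * e ≤ ν (hasseDeriv i u))
    (hv : ∀ j, hasseDeriv j v ≠ 0 → ν v - j * e ≤ ν (hasseDeriv j v))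
    {b : ℕ} (hne : hasseDeriv b (u * v) ≠ 0) :
    ν (u * v) - b * e ≤ ν (hasseDeriv b (u * v)) := by
  have huv : u * v ≠ 0 := fun h => hne (by rw [h, map_zero])
  refine le_apply_hasseDeriv_mul hν.map_add (fun i j hij hi hj => ?_) hne
  rw [hν.map_mul _ _ (left_ne_zero_of_mul huv) (right_ne_zero_of_mul huv),
    hν.map_mul _ _ hi hj, ← hij]
  push_cast
  linarith [hu i hi, hv j hj]

end IsVal

theorem sub_mul_eps_self_le_val_hasseDeriv (ν : K[X] → Γ) {g : K[X]} {b : ℕ}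
    (h : hasseDeriv b g ≠ 0) : ν g - b * eps ν g ≤ ν (hasseDeriv b g) := by
  rcases Nat.eq_zero_or_pos b with rfl | hb
  · simp
  have hmem : b ∈ (Icc 1 g.natDegree).filter fun b => hasseDeriv b g ≠ 0 :=
    mem_filter.mpr ⟨mem_Icc.mpr ⟨hb, le_natDegree_of_hasseDeriv_ne_zero h⟩, h⟩
  have hsup : (ν g - ν (hasseDeriv b g)) / b ≤ eps ν g := by
    rw [eps, dif_pos ⟨b, hmem⟩]
    exact le_sup' (fun b => (ν g - ν (hasseDeriv b g)) / (b : Γ)) hmem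
  rw [div_le_iff₀ (by exact_mod_cast hb)] at hsup
  linarith

theorem Iset_nonempty (ν : K[X] → Γ) {Q : K[X]} (hQ : 1 ≤ Q.natDegree) :
    (Iset ν Q).Nonempty := by
  have hQ0 : Q ≠ 0 := ne_zero_of_natDegree_gt hQ
  have hder : hasseDeriv Q.natDegree Q ≠ 0 := by
    rw [hasseDeriv_natDegree_eq_C]
    simpa using hQ0
  have hne : ((Icc 1 Q.natDegree).filter fun b => hasseDeriv b Q ≠ 0).Nonempty :=
    ⟨_, mem_filter.mpr ⟨mem_Icc.mpr ⟨hQ, le_rfl⟩, hder⟩⟩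
  obtain ⟨b, hb, hmax⟩ := exists_mem_eq_sup' hne
    fun b => (ν Q - ν (hasseDeriv b Q)) / (b : Γ)
  rw [mem_filter, mem_Icc] at hb
  exact ⟨b, hb.1.1, hb.2, by rw [eps, dif_pos hne, hmax]⟩

theorem val_hasseDeriv_of_mem_Iset {Q : K[X]} {b : ℕ} (hb : b ∈ Iset ν Q) :
    ν (hasseDeriv b Q) = ν Q - b * eps ν Q := by
  obtain ⟨hb1, -, heq⟩ := hb
  rw [← heq, mul_div_cancel₀ _ (by exact_mod_cast (by omega : b ≠ 0))]
  ring

section QExpansion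

variable {Q : K[X]}

theorem add_divByMonic {R : Type*} [CommRing R] [Nontrivial R] {q : R[X]} (hq : q.Monic)
    (p₁ p₂ : R[X]) :
    (p₁ + p₂) /ₘ q = p₁ /ₘ q + p₂ /ₘ q :=
  (div_modByMonic_unique (p₁ /ₘ q + p₂ /ₘ q) (p₁ %ₘ q + p₂ %ₘ q) hq
    ⟨by rw [mul_add, add_add_add_comm, modByMonic_add_div, modByMonic_add_div],
      (degree_add_le _ _).trans_lt
        (max_lt (degree_modByMonic_lt _ hq) (degree_modByMonic_lt _ hq))⟩).1

theorem divByMonic_pow_succ (hQ : Q.Monic) (f : K[X]) (i : ℕ) :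
    f /ₘ Q ^ (i + 1) = f /ₘ Q /ₘ Q ^ i := by
  refine (div_modByMonic_unique _ (Q * (f /ₘ Q %ₘ Q ^ i) + f %ₘ Q) (hQ.pow (i + 1))
    ⟨?_, (degree_add_le _ _).trans_lt (max_lt ?_ ?_)⟩).1
  · calc Q * (f /ₘ Q %ₘ Q ^ i) + f %ₘ Q + Q ^ (i + 1) * (f /ₘ Q /ₘ Q ^ i)
        = f %ₘ Q + Q * (f /ₘ Q %ₘ Q ^ i + Q ^ i * (f /ₘ Q /ₘ Q ^ i)) := by ring
      _ = f := by rw [modByMonic_add_div, modByMonic_add_div]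
  · rw [pow_succ', degree_mul, degree_mul]
    exact WithBot.add_lt_add_left (by simpa using hQ.ne_zero)
      (degree_modByMonic_lt _ (hQ.pow i))
  · exact (degree_modByMonic_lt _ hQ).trans_le
      (degree_le_of_dvd (dvd_pow_self Q i.succ_ne_zero) (pow_ne_zero _ hQ.ne_zero))

theorem qCoeff_zero (f : K[X]) : qCoeff Q f 0 = f %ₘ Q := by
  rw [qCoeff, pow_zero, divByMonic_one]

theorem qCoeff_succ (hQ : Q.Monic) (f : K[X]) (i : ℕ) :
    qCoeff Q f (i + 1) = qCoeff Q (f /ₘ Q) i := by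
  rw [qCoeff, qCoeff, divByMonic_pow_succ hQ]

theorem qCoeff_add (hQ : Q.Monic) (f g : K[X]) (i : ℕ) :
    qCoeff Q (f + g) i = qCoeff Q f i + qCoeff Q g i := by
  rw [qCoeff, qCoeff, qCoeff, add_divByMonic (hQ.pow i), add_modByMonic]

theorem qCoeff_zero_of_natDegree_lt (hQ : Q.Monic) {f : K[X]} (hf : f.natDegree < Q.natDegree) :
    qCoeff Q f 0 = f := by
  rw [qCoeff_zero, modByMonic_eq_self_iff hQ]
  exact degree_lt_degree hf

theorem qCoeff_eq_zero_of_natDegree_lt (hQ : Q.Monic) {f : K[X]} {i : ℕ}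
    (hf : f.natDegree < i * Q.natDegree) : qCoeff Q f i = 0 := by
  rw [qCoeff, (divByMonic_eq_zero_iff (hQ.pow i)).mpr, zero_modByMonic]
  exact degree_lt_degree (by rwa [hQ.natDegree_pow])

theorem natDegree_qCoeff_lt (hQ : Q.Monic) {f : K[X]} {i : ℕ} (h : qCoeff Q f i ≠ 0) :
    (qCoeff Q f i).natDegree < Q.natDegree :=
  natDegree_lt_natDegree h (degree_modByMonic_lt _ hQ)

theorem le_natDegree_of_qCoeff_ne_zero (hQ : Q.Monic) (hm : 1 ≤ Q.natDegree) {f : K[X]} {i : ℕ}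
    (h : qCoeff Q f i ≠ 0) : i ≤ f.natDegree := by
  by_contra! hi
  exact h (qCoeff_eq_zero_of_natDegree_lt hQ (hi.trans_le (Nat.le_mul_of_pos_right i hm)))

theorem sum_qCoeff_mul_pow (hQ : Q.Monic) (hm : 1 ≤ Q.natDegree) {N : ℕ} {f : K[X]}
    (hN : f.natDegree ≤ N) : ∑ i ∈ range (N + 1), qCoeff Q f i * Q ^ i = f := by
  induction N generalizing f with
  | zero => rw [sum_range_one, qCoeff_zero_of_natDegree_lt hQ (by omega), pow_zero, mul_one]
  | succ N ih =>
    have hd : (f /ₘ Q).natDegree ≤ N := by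
      rw [natDegree_divByMonic f hQ]
      omega
    rw [sum_range_succ', qCoeff_zero, pow_zero, mul_one]
    simp_rw [qCoeff_succ hQ, pow_succ', ← mul_assoc, mul_comm _ Q, mul_assoc, ← mul_sum, ih hd]
    exact add_comm _ _ |>.trans (modByMonic_add_div f Q)

theorem exists_qCoeff_ne_zero (hQ : Q.Monic) (hm : 1 ≤ Q.natDegree) {f : K[X]} (hf : f ≠ 0) :
    ∃ i, qCoeff Q f i ≠ 0 := by
  by_contra! h
  exact hf (by simpa [h] using (sum_qCoeff_mul_pow hQ hm (f := f) le_rfl).symm)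

end QExpansion

section Truncation

variable {Q : K[X]}

theorem mem_qSupport (hQ : Q.Monic) (hm : 1 ≤ Q.natDegree)
    {f : K[X]} {i : ℕ} (h : qCoeff Q f i ≠ 0) :
    i ∈ (range (f.natDegree + 1)).filter fun i => qCoeff Q f i ≠ 0 :=
  mem_filter.mpr ⟨mem_range.mpr (Nat.lt_succ_of_le (le_natDegree_of_qCoeff_ne_zero hQ hm h)), h⟩

theorem truncVal_le_val (hQ : Q.Monic) (hm : 1 ≤ Q.natDegree)
    {f : K[X]} {i : ℕ} (h : qCoeff Q f i ≠ 0) :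
    truncVal ν Q f ≤ ν (qCoeff Q f i * Q ^ i) := by
  rw [truncVal, dif_pos ⟨i, mem_qSupport hQ hm h⟩]
  exact inf'_le (fun i => ν (qCoeff Q f i * Q ^ i)) (mem_qSupport hQ hm h)

theorem le_truncVal (hQ : Q.Monic) (hm : 1 ≤ Q.natDegree)
    {f : K[X]} (hf : f ≠ 0) {c : Γ}
    (h : ∀ i, qCoeff Q f i ≠ 0 → c ≤ ν (qCoeff Q f i * Q ^ i)) : c ≤ truncVal ν Q f := by
  obtain ⟨j, hj⟩ := exists_qCoeff_ne_zero hQ hm hf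
  rw [truncVal, dif_pos ⟨j, mem_qSupport hQ hm hj⟩]
  exact le_inf' _ _ fun i hi => h i (mem_filter.mp hi).2

theorem truncVal_of_natDegree_lt (hQ : Q.Monic) (hm : 1 ≤ Q.natDegree)
    {f : K[X]} (hf : f ≠ 0) (hd : f.natDegree < Q.natDegree) :
    truncVal ν Q f = ν f := by
  have h0 := qCoeff_zero_of_natDegree_lt hQ hd
  refine le_antisymm ?_ (le_truncVal hQ hm hf fun i hi => ?_)
  · have h := truncVal_le_val (ν := ν) hQ hm (f := f) (i := 0) (by rwa [h0])
    rwa [h0, pow_zero, mul_one] at h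
  rcases i with _ | i
  · rw [h0, pow_zero, mul_one]
  · exact absurd (qCoeff_eq_zero_of_natDegree_lt hQ
      (hd.trans_le (Nat.le_mul_of_pos_left _ i.succ_pos))) hi

theorem min_le_truncVal_add (hQ : Q.Monic) (hm : 1 ≤ Q.natDegree)
    (hν : IsVal ν) {f g : K[X]} (hfg : f + g ≠ 0) :
    min (truncVal ν Q f) (truncVal ν Q g) ≤ truncVal ν Q (f + g) := by
  refine le_truncVal hQ hm hfg fun i hi => ?_
  rw [qCoeff_add hQ] at hi ⊢
  by_cases h1 : qCoeff Q f i = 0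
  · rw [h1, zero_add] at hi ⊢
    exact (min_le_right _ _).trans (truncVal_le_val hQ hm hi)
  by_cases h2 : qCoeff Q g i = 0
  · rw [h2, add_zero] at hi ⊢
    exact (min_le_left _ _).trans (truncVal_le_val hQ hm hi)
  have hQi : Q ^ i ≠ 0 := pow_ne_zero _ hQ.ne_zero
  have hsum := mul_ne_zero hi hQi
  rw [add_mul] at hsum ⊢
  exact (min_le_min (truncVal_le_val hQ hm h1) (truncVal_le_val hQ hm h2)).trans
    (hν.map_add _ _ (mul_ne_zero h1 hQi) (mul_ne_zero h2 hQi) hsum)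

theorem truncVal_add_val_le_truncVal_mul_self (hQ : Q.Monic) (hm : 1 ≤ Q.natDegree)
    (hν : IsVal ν) {f : K[X]} (hf : f ≠ 0) :
    truncVal ν Q f + ν Q ≤ truncVal ν Q (f * Q) := by
  refine le_truncVal hQ hm (mul_ne_zero hf hQ.ne_zero) fun i hi => ?_
  rcases i with _ | i
  · exact absurd (by rw [qCoeff_zero, mul_self_modByMonic hQ]) hi
  rw [qCoeff_succ hQ, mul_comm f, mul_divByMonic_cancel_left f hQ] at hi ⊢
  rw [pow_succ, ← mul_assoc, hν.map_mul _ Q (mul_ne_zero hi (pow_ne_zero _ hQ.ne_zero)) hQ.ne_zero]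
  exact add_le_add_left (truncVal_le_val hQ hm hi) _

theorem truncVal_add_mul_val_le_truncVal_mul_pow (hQ : Q.Monic) (hm : 1 ≤ Q.natDegree)
    (hν : IsVal ν) {f : K[X]} (hf : f ≠ 0) (k : ℕ) :
    truncVal ν Q f + k * ν Q ≤ truncVal ν Q (f * Q ^ k) := by
  induction k with
  | zero => simp
  | succ k ih =>
    rw [pow_succ, ← mul_assoc]
    have h := truncVal_add_val_le_truncVal_mul_self hQ hm hν
      (mul_ne_zero hf (pow_ne_zero k hQ.ne_zero))
    push_cast
    linarith

end Truncation

namespace IsKeyPol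

variable {Q : K[X]}

theorem eps_lt (hQ : IsKeyPol ν Q) {u : K[X]} (hu : 1 ≤ u.natDegree)
    (huQ : u.natDegree < Q.natDegree) : eps ν u < eps ν Q :=
  lt_of_not_ge fun h => (hQ.2.2 u hu h).not_gt huQ

theorem sub_mul_eps_lt_val_hasseDeriv (hQ : IsKeyPol ν Q) {u : K[X]}
    (hu : u.natDegree < Q.natDegree) {i : ℕ} (hi : 1 ≤ i) (hne : hasseDeriv i u ≠ 0) :
    ν u - i * eps ν Q < ν (hasseDeriv i u) := by
  have hlt := hQ.eps_lt (hi.trans (le_natDegree_of_hasseDeriv_ne_zero hne)) hu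
  have hi0 : (0 : Γ) < i := by exact_mod_cast hi
  linarith [sub_mul_eps_self_le_val_hasseDeriv ν hne, mul_lt_mul_of_pos_left hlt hi0]

theorem sub_mul_eps_le_val_hasseDeriv (hQ : IsKeyPol ν Q) {u : K[X]}
    (hu : u.natDegree < Q.natDegree) {i : ℕ} (hne : hasseDeriv i u ≠ 0) :
    ν u - i * eps ν Q ≤ ν (hasseDeriv i u) := by
  rcases Nat.eq_zero_or_pos i with rfl | hi
  · simp
  · exact (hQ.sub_mul_eps_lt_val_hasseDeriv hu hi hne).le

theorem val_hasseDeriv_mul_of_mem_Iset (hν : IsVal ν) (hQ : IsKeyPol ν Q) {a : K[X]}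
    (ha : a ≠ 0) (haQ : a.natDegree < Q.natDegree) {b : ℕ} (hb : b ∈ Iset ν Q) :
    hasseDeriv b (Q * a) ≠ 0 ∧ ν (hasseDeriv b (Q * a)) = ν (Q * a) - b * eps ν Q := by
  have hbQ : hasseDeriv b Q ≠ 0 := hb.2.1
  have hlead : ν (hasseDeriv b Q * a) = ν (Q * a) - b * eps ν Q := by
    rw [hν.map_mul _ _ hbQ ha, hν.map_mul _ _ hQ.1.ne_zero ha, val_hasseDeriv_of_mem_Iset hb]
    ring
  rw [hasseDeriv_mul, ← add_sum_erase _ _ (by simp : (b, 0) ∈ antidiagonal b)]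
  dsimp only
  rw [hasseDeriv_zero', ← hlead]
  refine hν.map_add_of_lt (mul_ne_zero hbQ ha) fun hS => lt_apply_sum hν.map_add ?_ hS
  rintro ⟨i, j⟩ hij hF
  obtain ⟨hne, hij⟩ := mem_erase.mp hij
  rw [HasAntidiagonal.mem_antidiagonal] at hij
  have hi : hasseDeriv i Q ≠ 0 := left_ne_zero_of_mul hF
  have hj : hasseDeriv j a ≠ 0 := right_ne_zero_of_mul hF
  have hj1 : 1 ≤ j := Nat.pos_of_ne_zero fun h0 => hne (by simp_all)
  rw [hlead, hν.map_mul _ _ hi hj, hν.map_mul _ _ hQ.1.ne_zero ha, ← hij]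
  push_cast
  linarith [sub_mul_eps_self_le_val_hasseDeriv ν hi, hQ.sub_mul_eps_lt_val_hasseDeriv haQ hj1 hj]

theorem val_mul_le_of_eq_add_of_le (hν : IsVal ν) (hQ : IsKeyPol ν Q) {u v a r : K[X]}
    (hu : u.natDegree < Q.natDegree) (hv : v.natDegree < Q.natDegree)
    (ha : a ≠ 0) (haQ : a.natDegree < Q.natDegree) (hrQ : r.natDegree < Q.natDegree)
    (hr : r ≠ 0 → ν (Q * a) ≤ ν r) (h : u * v = Q * a + r) : ν (u * v) ≤ ν (Q * a) := by
  obtain ⟨b, hb⟩ := Iset_nonempty ν hQ.2.1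
  obtain ⟨hne, hval⟩ := hQ.val_hasseDeriv_mul_of_mem_Iset hν ha haQ hb
  have hsum := hν.map_add_of_lt (y := hasseDeriv b r) hne fun hr' => by
    rw [hval]
    linarith [hQ.sub_mul_eps_lt_val_hasseDeriv hrQ hb.1 hr', hr fun h0 => hr' (by simp [h0])]
  rw [← map_add, ← h, hval] at hsum
  have hleib := hν.sub_mul_le_val_hasseDeriv_mul (fun i => hQ.sub_mul_eps_le_val_hasseDeriv hu)
    (fun j => hQ.sub_mul_eps_le_val_hasseDeriv hv) hsum.1
  linarith [hsum.2]

theorem val_mul_le_of_eq_add (hν : IsVal ν) (hQ : IsKeyPol ν Q) {u v a r : K[X]}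
    (hu : u.natDegree < Q.natDegree) (hv : v.natDegree < Q.natDegree)
    (haQ : a.natDegree < Q.natDegree) (hrQ : r.natDegree < Q.natDegree)
    (h : u * v = Q * a + r) : (a ≠ 0 → ν (u * v) ≤ ν (Q * a)) ∧ (r ≠ 0 → ν (u * v) ≤ ν r) := by
  by_cases ha : a = 0
  · rw [ha, mul_zero, zero_add] at h
    exact ⟨fun h => absurd ha h, fun _ => (congrArg ν h).le⟩
  by_cases hlt : r ≠ 0 ∧ ν r < ν (Q * a)
  · have hval := (hν.map_add_of_lt hlt.1 fun _ => hlt.2).2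
    rw [add_comm, ← h] at hval
    exact ⟨fun _ => hval.le.trans hlt.2.le, fun _ => hval.le⟩
  · have hle : r ≠ 0 → ν (Q * a) ≤ ν r := fun hr => not_lt.mp fun h => hlt ⟨hr, h⟩
    have hval := hQ.val_mul_le_of_eq_add_of_le hν hu hv ha haQ hrQ hle h
    exact ⟨fun _ => hval, fun hr => hval.trans (hle hr)⟩

theorem val_le_truncVal_mul (hν : IsVal ν) (hQ : IsKeyPol ν Q) {u v : K[X]} (huv : u * v ≠ 0)
    (hu : u.natDegree < Q.natDegree) (hv : v.natDegree < Q.natDegree) :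
    ν (u * v) ≤ truncVal ν Q (u * v) := by
  have hdeg : (u * v).natDegree < 2 * Q.natDegree := natDegree_mul_le.trans_lt (by omega)
  set a := u * v /ₘ Q
  set r := u * v %ₘ Q
  have haQ : a.natDegree < Q.natDegree := by
    rw [natDegree_divByMonic _ hQ.1]
    omega
  have hrQ : r.natDegree < Q.natDegree := by
    by_cases hr : r = 0
    · rw [hr, natDegree_zero]
      exact hQ.2.1
    · exact natDegree_lt_natDegree hr (degree_modByMonic_lt _ hQ.1)
  have huv_eq : u * v = Q * a + r := (add_comm _ _).trans (modByMonic_add_div _ Q) |>.symm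
  have key := hQ.val_mul_le_of_eq_add hν hu hv haQ hrQ huv_eq
  refine le_truncVal hQ.1 hQ.2.1 huv fun i hi => ?_
  rcases i with _ | _ | i
  · rw [qCoeff_zero] at hi ⊢
    simpa using key.2 hi
  · rw [qCoeff_succ hQ.1, qCoeff_zero_of_natDegree_lt hQ.1 haQ] at hi ⊢
    simpa [mul_comm] using key.1 hi
  · exact absurd (qCoeff_eq_zero_of_natDegree_lt hQ.1
      (hdeg.trans_le (Nat.mul_le_mul_right _ (by omega)))) hi

theorem truncVal_add_val_le_truncVal_mul (hν : IsVal ν) (hQ : IsKeyPol ν Q) {h w : K[X]}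
    (hh : h ≠ 0) (hw : w ≠ 0) (hwQ : w.natDegree < Q.natDegree) :
    truncVal ν Q h + ν w ≤ truncVal ν Q (h * w) := by
  have hexp : h * w = ∑ i ∈ range (h.natDegree + 1), qCoeff Q h i * w * Q ^ i := by
    conv_lhs => rw [← sum_qCoeff_mul_pow hQ.1 hQ.2.1 (f := h) le_rfl]
    rw [sum_mul]
    exact sum_congr rfl fun i _ => by ring
  rw [hexp]
  refine le_apply_sum (fun _ _ _ _ => min_le_truncVal_add hQ.1 hQ.2.1 hν) (fun i _ hi => ?_)
    (by rw [← hexp]; exact mul_ne_zero hh hw)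
  have hiw : qCoeff Q h i * w ≠ 0 := left_ne_zero_of_mul hi
  have hi0 : qCoeff Q h i ≠ 0 := left_ne_zero_of_mul hiw
  have hQ0 := hQ.1.ne_zero
  calc truncVal ν Q h + ν w ≤ ν (qCoeff Q h i * Q ^ i) + ν w := by
        gcongr
        exact truncVal_le_val hQ.1 hQ.2.1 hi0
    _ = ν (qCoeff Q h i * w) + i * ν Q := by
        rw [hν.map_mul _ _ hi0 (pow_ne_zero _ hQ0), hν.map_mul _ _ hi0 hw, hν.map_pow hQ0]
        ring
    _ ≤ truncVal ν Q (qCoeff Q h i * w) + i * ν Q := by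
        gcongr
        exact hQ.val_le_truncVal_mul hν hiw (natDegree_qCoeff_lt hQ.1 hi0) hwQ
    _ ≤ truncVal ν Q (qCoeff Q h i * w * Q ^ i) :=
        truncVal_add_mul_val_le_truncVal_mul_pow hQ.1 hQ.2.1 hν hiw i

theorem truncVal_add_val_hasseDeriv_le (hν : IsVal ν) (hQ : IsKeyPol ν Q) {h : K[X]}
    (hh : h ≠ 0) {j : ℕ} (hj : hasseDeriv j Q ≠ 0) :
    truncVal ν Q h + ν (hasseDeriv j Q) ≤ truncVal ν Q (h * hasseDeriv j Q) := by
  rcases Nat.eq_zero_or_pos j with rfl | hj0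
  · rw [hasseDeriv_zero']
    exact truncVal_add_val_le_truncVal_mul_self hQ.1 hQ.2.1 hν hh
  · have hm := hQ.2.1
    exact hQ.truncVal_add_val_le_truncVal_mul hν hh hj
      ((natDegree_hasseDeriv_le Q j).trans_lt (by omega))

end IsKeyPol

theorem truncVal_deriv_ge_general (ν : Polynomial K → Γ) (hν : IsVal ν)
    (Q : Polynomial K) (hQ : IsKeyPol ν Q) (f : Polynomial K)
    (hdeg : f.natDegree < Q.natDegree) (n b : ℕ)
    (hder : Polynomial.hasseDeriv b (f * Q ^ n) ≠ 0) :
    ν (f * Q ^ n) - (b : Γ) * eps ν Q ≤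
      truncVal ν Q (Polynomial.hasseDeriv b (f * Q ^ n)) := by
  induction n generalizing b with
  | zero =>
    rw [pow_zero, mul_one] at hder ⊢
    rw [truncVal_of_natDegree_lt hQ.1 hQ.2.1 hder
      ((natDegree_hasseDeriv_le f b).trans_lt (by omega))]
    exact hQ.sub_mul_eps_le_val_hasseDeriv hdeg hder
  | succ n ih =>
    rw [pow_succ, ← mul_assoc] at hder ⊢
    have hfQn : f * Q ^ n ≠ 0 := left_ne_zero_of_mul fun h0 => hder (by rw [h0, map_zero])
    refine le_apply_hasseDeriv_mul (fun _ _ _ _ => min_le_truncVal_add hQ.1 hQ.2.1 hν)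
      (fun i j hij hi hj => ?_) hder
    calc ν (f * Q ^ n * Q) - b * eps ν Q
        = (ν (f * Q ^ n) - i * eps ν Q) + (ν Q - j * eps ν Q) := by
          rw [hν.map_mul _ _ hfQn hQ.1.ne_zero, ← hij]
          push_cast
          ring
      _ ≤ truncVal ν Q (hasseDeriv i (f * Q ^ n)) + ν (hasseDeriv j Q) :=
          add_le_add (ih i hi) (sub_mul_eps_self_le_val_hasseDeriv ν hj)
      _ ≤ truncVal ν Q (hasseDeriv i (f * Q ^ n) * hasseDeriv j Q) :=
          hQ.truncVal_add_val_hasseDeriv_le hν hi hj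

/-- For a key polynomial `Q` and `f` with `deg f < deg Q`,
`ν_Q(∂_b(f Q^n)) ≥ ν(f Q^n) - b ε(Q)` for every `b`. -/
theorem truncVal_deriv_ge (ν : Polynomial K → Γ) (hν : IsVal ν)
    (Q : Polynomial K) (hQ : IsKeyPol ν Q) (f : Polynomial K) (hf : f ≠ 0)
    (hdeg : f.natDegree < Q.natDegree) (n b : ℕ) (hb : 1 ≤ b)
    (hder : Polynomial.hasseDeriv b (f * Q ^ n) ≠ 0) :
    ν (f * Q ^ n) - (b : Γ) * eps ν Q ≤
      truncVal ν Q (Polynomial.hasseDeriv b (f * Q ^ n)) :=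
  truncVal_deriv_ge_general ν hν Q hQ f hdeg n b hder
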